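/- In a bit multigraph corresponding to a crossword puzzle, the number of edges incident to the zero floor set ⌊0⌋_A is at least the number of floor sets of part B that have exactly one vertex. -/

import Mathlib

/-- Edge labels of a bit multigraph: `+`, `-`, `0`. -/
inductive Label
  | plus
  | minus
  | zero
  deriving DecidableEq

/-- A (balanced) bipartite indexed tricolored multigraph: vertex indices in each
part are rationals, edges are triples (index in A, index in B, label). -/
structure BitMG where
  A : Finset ℚ
  B : Finset ℚ
  E : Multiset (ℚ × ℚ × Label)

/-- Degree of a vertex of part A: number of incident edges. -/
def degA (G : BitMG) (x : ℚ) : ℕ := (G.E.filter (fun e => e.1 = x)).card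

/-- Degree of a vertex of part B: number of incident edges. -/
def degB (G : BitMG) (y : ℚ) : ℕ := (G.E.filter (fun e => e.2.1 = y)).card

/-- Given that the edge `(a,b,L)` was voided and a vertex incident to it was split
into `v0` (lower) and `v1` (upper), `splitTarget L M v0 v1 other otherRemoved`
tells which of the two split vertices an edge labeled `M`, whose other endpoint is
`other` (the other endpoint of the removed edge being `otherRemoved`), is
reassigned to, following the voiding rules of the paper. -/
def splitTarget (L M : Label) (v0 v1 : ℚ) (other otherRemoved : ℚ) : ℚ :=
  if M = L then
    match L with
    | Label.minus => if otherRemoved < other then v0 else v1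
    | _ => if other < otherRemoved then v0 else v1
  else
    match M with
    | Label.plus => v1
    | Label.minus => v0
    | Label.zero => if L = Label.plus then v0 else v1

/-- The voiding procedure: `Voiding G G'` holds when `G'` is obtained from `G` by
removing one edge `(a,b,L)`, splitting `a` into fresh vertices `a0 < a1` and `b`
into `b0 < b1` (keeping integer parts and relative order of indices), and
reassigning the remaining incident edges according to the rules of the paper. -/
def Voiding (G G' : BitMG) : Prop :=
  ∃ a b L, (a, b, L) ∈ G.E ∧ a ∈ G.A ∧ b ∈ G.B ∧
    ∃ a0 a1 b0 b1 : ℚ,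
      a0 ∉ G.A ∧ a1 ∉ G.A ∧ b0 ∉ G.B ∧ b1 ∉ G.B ∧
      a0 < a1 ∧ b0 < b1 ∧
      ⌊a0⌋ = ⌊a⌋ ∧ ⌊a1⌋ = ⌊a⌋ ∧ ⌊b0⌋ = ⌊b⌋ ∧ ⌊b1⌋ = ⌊b⌋ ∧
      (∀ x ∈ G.A, x ≠ a → (x < a → x < a0) ∧ (a < x → a1 < x)) ∧
      (∀ y ∈ G.B, y ≠ b → (y < b → y < b0) ∧ (b < y → b1 < y)) ∧
      G'.A = insert a0 (insert a1 (G.A.erase a)) ∧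
      G'.B = insert b0 (insert b1 (G.B.erase b)) ∧
      G'.E = (G.E.erase (a, b, L)).map (fun e =>
        ((if e.1 = a then splitTarget L e.2.2 a0 a1 e.2.1 b else e.1),
         (if e.2.1 = b then splitTarget L e.2.2 b0 b1 e.1 a else e.2.1),
         e.2.2))

/-- `VoidedFrom v G G'` : `G'` is obtained from `G` by `v` voiding operations. -/
def VoidedFrom : ℕ → BitMG → BitMG → Prop
  | 0, G, G' => G' = G
  | v + 1, G, G' => ∃ H, VoidedFrom v G H ∧ Voiding H G'

/-- The crossword multigraph of the unvoided (2n+1)×(2n+1) grid: each part has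
vertices indexed 0,1,…,n; nonzero vertices are pairwise joined by one `+` and one
`-` edge, and zero vertices are joined to every vertex of the other part by a `0`
edge (with a single 0–0 edge). -/
def unvoidedCMG (n : ℕ) : BitMG where
  A := (Finset.Icc 0 n).image (fun i : ℕ => (i : ℚ))
  B := (Finset.Icc 0 n).image (fun i : ℕ => (i : ℚ))
  E := ((Finset.Icc 1 n ×ˢ Finset.Icc 1 n).val.map
          (fun p => ((p.1 : ℚ), (p.2 : ℚ), Label.plus)))
      + ((Finset.Icc 1 n ×ˢ Finset.Icc 1 n).val.map
          (fun p => ((p.1 : ℚ), (p.2 : ℚ), Label.minus)))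
      + ((Finset.Icc 0 n).val.map (fun b => ((0 : ℚ), (b : ℚ), Label.zero)))
      + ((Finset.Icc 1 n).val.map (fun a => ((a : ℚ), (0 : ℚ), Label.zero)))

/-! Voiding moves edge endpoints only within floor sets, and it puts two vertices into the
floor set of the split vertex of `B`. Hence a vertex of `B` alone in its floor set was never
split, and its original `0`-edge to the zero vertex of `A` still ends in `⌊0⌋_A`. Distinct such
floor sets give distinct edges. -/

def SingletonFloorsAdjZero (G : BitMG) : Prop :=
  ∀ q ∈ G.B, (G.B.filter (fun q' => ⌊q'⌋ = ⌊q⌋)).card = 1 →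
    ∃ e ∈ G.E, ⌊e.1⌋ = 0 ∧ e.2.1 = q

lemma floor_splitTarget {L M : Label} {v0 v1 : ℚ} (o o' : ℚ) {z : ℤ}
    (h0 : ⌊v0⌋ = z) (h1 : ⌊v1⌋ = z) : ⌊splitTarget L M v0 v1 o o'⌋ = z := by
  unfold splitTarget
  cases L <;> cases M <;> split_ifs <;> simp_all

lemma filter_floor_insert_insert_erase (s : Finset ℚ) {b b0 b1 : ℚ} {r : ℤ}
    (h0 : ⌊b0⌋ = ⌊b⌋) (h1 : ⌊b1⌋ = ⌊b⌋) (hr : r ≠ ⌊b⌋) :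
    (insert b0 (insert b1 (s.erase b))).filter (fun q => ⌊q⌋ = r) =
      s.filter (fun q => ⌊q⌋ = r) := by
  rw [Finset.filter_insert, Finset.filter_insert, Finset.filter_erase, if_neg (h0 ▸ hr.symm),
    if_neg (h1 ▸ hr.symm), Finset.erase_eq_of_notMem]
  simpa using fun _ => hr.symm

lemma Voiding.exists_split {H G : BitMG} (h : Voiding H G) :
    ∃ b, 1 < (G.B.filter (fun q => ⌊q⌋ = ⌊b⌋)).card ∧
      (∀ r ≠ ⌊b⌋, G.B.filter (fun q => ⌊q⌋ = r) = H.B.filter (fun q => ⌊q⌋ = r)) ∧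
      ∀ e ∈ H.E, e.2.1 ≠ b → ∃ e' ∈ G.E, ⌊e'.1⌋ = ⌊e.1⌋ ∧ e'.2.1 = e.2.1 := by
  obtain ⟨a, b, L, -, -, -, a0, a1, b0, b1, -, -, -, -, -, hb01, ha0, ha1, hb0, hb1, -, -, -,
    hGB, hGE⟩ := h
  refine ⟨b, Finset.one_lt_card.2 ⟨b0, ?_, b1, ?_, hb01.ne⟩, fun r hr => ?_, fun e he heb => ?_⟩
  · simp [hGB, hb0]
  · simp [hGB, hb1]
  · rw [hGB, filter_floor_insert_insert_erase _ hb0 hb1 hr]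
  · have hne : e ≠ (a, b, L) := fun hab => heb (by rw [hab])
    refine ⟨_, hGE ▸ Multiset.mem_map_of_mem _ ((Multiset.mem_erase_of_ne hne).2 he), ?_, ?_⟩
    · dsimp only
      split_ifs with hea
      · exact floor_splitTarget _ _ (ha0.trans (congrArg _ hea.symm))
          (ha1.trans (congrArg _ hea.symm))
      · rfl
    · simp [heb]

lemma Voiding.singletonFloorsAdjZero {H G : BitMG} (h : Voiding H G)
    (hH : SingletonFloorsAdjZero H) : SingletonFloorsAdjZero G := by
  obtain ⟨b, hsplit, hfloors, hedges⟩ := h.exists_split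
  intro q hq hcard
  have hqb : ⌊q⌋ ≠ ⌊b⌋ := fun hfl => by rw [hfl] at hcard; omega
  have hqH : q ∈ H.B := by
    have hmem : q ∈ G.B.filter (fun q' => ⌊q'⌋ = ⌊q⌋) := Finset.mem_filter.2 ⟨hq, rfl⟩
    rw [hfloors _ hqb] at hmem
    exact Finset.mem_of_mem_filter q hmem
  obtain ⟨e, he, he0, heq⟩ := hH q hqH (hfloors _ hqb ▸ hcard)
  obtain ⟨e', he', he'0, he'q⟩ := hedges e he (heq ▸ fun hb => hqb (hb ▸ rfl))
  exact ⟨e', he', he'0.trans he0, he'q.trans heq⟩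

lemma unvoidedCMG_singletonFloorsAdjZero (n : ℕ) : SingletonFloorsAdjZero (unvoidedCMG n) := by
  intro q hq _
  obtain ⟨i, hi, rfl⟩ := Finset.mem_image.1 hq
  refine ⟨((0 : ℚ), (i : ℚ), Label.zero), ?_, by norm_num, rfl⟩
  simp only [unvoidedCMG, bind, pure, Multiset.bind_singleton, Multiset.mem_add,
    Multiset.mem_map, Finset.mem_val]
  exact Or.inl (Or.inr ⟨i, ⟨i, hi, rfl⟩, rfl⟩)

lemma VoidedFrom.singletonFloorsAdjZero {n v : ℕ} {G : BitMG}
    (h : VoidedFrom v (unvoidedCMG n) G) : SingletonFloorsAdjZero G := by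
  induction v generalizing G with
  | zero => exact h ▸ unvoidedCMG_singletonFloorsAdjZero n
  | succ v ih =>
    obtain ⟨H, hH, hV⟩ := h
    exact hV.singletonFloorsAdjZero (ih hH)

/-- In a bit multigraph corresponding to a crossword puzzle, the number of edges
incident to the zero floor set ⌊0⌋_A is at least the number of floor sets of part
B that have exactly one vertex. -/
theorem zero_floor_lower_bound (n : ℕ) (G : BitMG)
    (hG : ∃ v, VoidedFrom v (unvoidedCMG n) G) :
    ((G.B.image (fun q => ⌊q⌋)).filter
        (fun r => (G.B.filter (fun q => ⌊q⌋ = r)).card = 1)).card ≤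
      (G.E.filter (fun e => ⌊e.1⌋ = 0)).card := by
  obtain ⟨v, hv⟩ := hG
  set Z := G.E.filter (fun e => ⌊e.1⌋ = 0)
  have hsub : (G.B.image (fun q => ⌊q⌋)).filter
      (fun r => (G.B.filter (fun q => ⌊q⌋ = r)).card = 1) ⊆
        (Z.map (fun e => ⌊e.2.1⌋)).toFinset := by
    intro r hr
    rw [Finset.mem_filter, Finset.mem_image] at hr
    obtain ⟨⟨q, hq, rfl⟩, hcard⟩ := hr
    obtain ⟨e, he, he0, heq⟩ := hv.singletonFloorsAdjZero q hq hcard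
    rw [Multiset.mem_toFinset, Multiset.mem_map]
    exact ⟨e, Multiset.mem_filter.2 ⟨he, he0⟩, heq ▸ rfl⟩
  calc _ ≤ (Z.map (fun e => ⌊e.2.1⌋)).toFinset.card := Finset.card_le_card hsub
    _ ≤ (Z.map (fun e => ⌊e.2.1⌋)).card := Multiset.toFinset_card_le _
    _ = Z.card := Multiset.card_map _ _
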